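/- arXiv:2005.13412 — 2 statements merged into one kernel-verified Lean document; each statement's English description precedes it below -/
import Mathlib

section
/- Let a, b, c, d with a > 0, b > 0, c = 2(a+b), d = −(3a+b), and let λ = 4b, μ = 2a. Then for any symmetric 3×3 matrix E with C = I + 2E, the Ciarlet–Geymonat energy W = a·tr C + b·det C − (c/2)·log(det C) + d satisfies W = (λ/2)tr²E + μ tr E² + O(|E|³) as E → 0. -/
open Matrix Asymptotics

attribute [local instance] Matrix.frobeniusNormedAddCommGroup

lemma CG_entry_le (E : Matrix (Fin 3) (Fin 3) ℝ) (i j : Fin 3) : |E i j| ≤ ‖E‖ := by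
  have h2 : ‖E‖ ^ 2 = ∑ i, ∑ j, (E i j) ^ 2 := by
    rw [Matrix.frobenius_norm_def, ← Real.rpow_natCast _ 2, ← Real.rpow_mul (by positivity)]
    norm_num
  have hle : (E i j) ^ 2 ≤ ‖E‖ ^ 2 := by
    rw [h2]
    have h1 : (E i j) ^ 2 ≤ ∑ j', (E i j') ^ 2 :=
      Finset.single_le_sum (f := fun j' => (E i j') ^ 2) (fun k _ => sq_nonneg _) (Finset.mem_univ j)
    exact h1.trans (Finset.single_le_sum (f := fun i' => ∑ j', (E i' j') ^ 2)
      (fun k _ => Finset.sum_nonneg fun _ _ => sq_nonneg _) (Finset.mem_univ i))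
  calc |E i j| = Real.sqrt ((E i j)^2) := (Real.sqrt_sq_eq_abs _).symm
    _ ≤ Real.sqrt (‖E‖^2) := Real.sqrt_le_sqrt hle
    _ = ‖E‖ := Real.sqrt_sq (norm_nonneg _)

lemma CG_det_expand (E : Matrix (Fin 3) (Fin 3) ℝ) :
    (1 + 2 • E).det = 1 + 2*E.trace + 2*(E.trace^2 - (E*E).trace) + 8*E.det := by
  simp [Matrix.det_fin_three, Matrix.trace_fin_three, Matrix.mul_apply, Fin.sum_univ_three,
    Matrix.one_apply, Matrix.add_apply, Matrix.smul_apply, two_smul]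
  ring

lemma CG_trace_expand (E : Matrix (Fin 3) (Fin 3) ℝ) :
    (1 + 2 • E).trace = 3 + 2*E.trace := by
  simp [Matrix.trace_add, Matrix.trace_smul, Matrix.trace_one, two_smul]
  ring

lemma CG_log_taylor (u : ℝ) (hu : |u| ≤ 1/2) :
    |Real.log (1+u) - (u - u^2/2)| ≤ 2*|u|^3 := by
  have hx : |(-u)| < 1 := by rw [abs_neg]; linarith
  have h := Real.abs_log_sub_add_sum_range_le hx 2
  have hsum : (∑ i ∈ Finset.range 2, (-u) ^ (i+1) / (i+1)) = -u + u^2/2 := by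
    simp [Finset.sum_range_succ]; ring
  rw [hsum] at h
  rw [abs_neg] at h
  have h2 : |u|^3 / (1 - |u|) ≤ 2*|u|^3 := by
    rw [div_le_iff₀ (by linarith)]
    nlinarith [pow_nonneg (abs_nonneg u) 3]
  have h3 : |(-u + u^2/2) + Real.log (1 - -u)| ≤ 2*|u|^3 := le_trans (by simpa using h) h2
  have h1 : (1 : ℝ) - (-u) = 1 + u := by ring
  rw [h1] at h3
  calc |Real.log (1+u) - (u - u^2/2)| = |(-u + u^2/2) + Real.log (1+u)| := by ring_nf
    _ ≤ 2*|u|^3 := h3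

lemma CG_w_bound (s t q m w : ℝ) (hs : 0 ≤ s) (hs1 : s ≤ 1/100)
    (ht : |t| ≤ 3*s) (hq : |q| ≤ 9*s^2) (hm : |m| ≤ 6*s^3)
    (hw : w = 2*t^2 - 2*q + 8*m) : |w| ≤ 37*s^2 := by
  obtain ⟨ht1, ht2⟩ := abs_le.mp ht
  obtain ⟨hq1, hq2⟩ := abs_le.mp hq
  obtain ⟨hm1, hm2⟩ := abs_le.mp hm
  have hts : t^2 ≤ 9*s^2 := by nlinarith
  have hs3 : s^3 ≤ s^2*(1/100) := by nlinarith
  rw [abs_le]; constructor <;> nlinarith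

lemma CG_u_bound (s t q m u : ℝ) (hs : 0 ≤ s) (hs1 : s ≤ 1/100)
    (ht : |t| ≤ 3*s) (hq : |q| ≤ 9*s^2) (hm : |m| ≤ 6*s^3)
    (hu : u = 2*t + 2*(t^2 - q) + 8*m) : |u| ≤ 7*s := by
  obtain ⟨ht1, ht2⟩ := abs_le.mp ht
  obtain ⟨hq1, hq2⟩ := abs_le.mp hq
  obtain ⟨hm1, hm2⟩ := abs_le.mp hm
  have hts : t^2 ≤ 9*s^2 := by nlinarith
  have hs2 : s^2 ≤ s*(1/100) := by nlinarith
  have hs3 : s^3 ≤ s*(1/10000) := by nlinarith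
  rw [abs_le]; constructor <;> nlinarith

lemma CG_wsq (s w : ℝ) (hs : 0 ≤ s) (hs1 : s ≤ 1/100) (hw : |w| ≤ 37*s^2) :
    w^2 ≤ 14*s^3 := by
  obtain ⟨hw1, hw2⟩ := abs_le.mp hw
  nlinarith

lemma CG_final (a b s m tw wsq h : ℝ) (ha : 0 < a) (hb : 0 < b)
    (hm : |m| ≤ 6*s^3) (htw : |tw| ≤ 111*s^3) (hwsq0 : 0 ≤ wsq)
    (hwsq : wsq ≤ 14*s^3) (hh : |h| ≤ 686*s^3) :
    |(-(8*a*m) + (a+b)*(2*tw + wsq/2) - (a+b)*h)| ≤ (48*a + 1000*(a+b)) * s^3 := by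
  obtain ⟨hm1, hm2⟩ := abs_le.mp hm
  obtain ⟨htw1, htw2⟩ := abs_le.mp htw
  obtain ⟨hh1, hh2⟩ := abs_le.mp hh
  have hab : (0:ℝ) ≤ a + b := by linarith
  rw [abs_le]
  constructor <;>
    nlinarith [mul_nonneg ha.le (by linarith : (0:ℝ) ≤ 6*s^3 - m),
      mul_nonneg hab (by linarith : (0:ℝ) ≤ 111*s^3 - tw),
      mul_nonneg hab hwsq0,
      mul_nonneg hab (by linarith : (0:ℝ) ≤ 686*s^3 - h),
      mul_nonneg ha.le (by linarith : (0:ℝ) ≤ m + 6*s^3),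
      mul_nonneg hab (by linarith : (0:ℝ) ≤ tw + 111*s^3),
      mul_nonneg hab (by linarith : (0:ℝ) ≤ h + 686*s^3),
      mul_nonneg hab (by linarith : (0:ℝ) ≤ 14*s^3 - wsq)]

lemma CG_numeric (a b s t q m : ℝ) (ha : 0 < a) (hb : 0 < b)
    (hs : 0 ≤ s) (hs1 : s ≤ 1/100)
    (ht : |t| ≤ 3*s) (hq : |q| ≤ 9*s^2) (hm : |m| ≤ 6*s^3) :
    |a * (3 + 2*t) + b * (1 + (2*t + 2*(t^2 - q) + 8*m))
      - 2*(a+b) / 2 * Real.log (1 + (2*t + 2*(t^2 - q) + 8*m)) + -(3*a+b)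
      - (4*b / 2 * t ^ 2 + 2*a * q)| ≤ (48*a + 1000*(a+b)) * s^3 := by
  set u : ℝ := 2*t + 2*(t^2 - q) + 8*m with hu_def
  set w : ℝ := 2*t^2 - 2*q + 8*m with hw_def
  have hu7 : |u| ≤ 7*s := CG_u_bound s t q m u hs hs1 ht hq hm hu_def
  have hw37 : |w| ≤ 37*s^2 := CG_w_bound s t q m w hs hs1 ht hq hm hw_def
  have hu_half : |u| ≤ 1/2 := le_trans hu7 (by linarith)
  set h : ℝ := Real.log (1+u) - (u - u^2/2) with hh_def
  have hlog := CG_log_taylor u hu_half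
  rw [← hh_def] at hlog
  have hu3 : |u|^3 ≤ 343*s^3 := by
    have := pow_le_pow_left₀ (abs_nonneg u) hu7 3
    calc |u|^3 ≤ (7*s)^3 := this
      _ = 343*s^3 := by ring
  have hh_bound : |h| ≤ 686*s^3 := by linarith
  have hlogD : Real.log (1 + u) = u - u^2/2 + h := by rw [hh_def]; ring
  have htw : |t*w| ≤ 111*s^3 := by
    rw [abs_mul]
    calc |t| * |w| ≤ (3*s)*(37*s^2) := mul_le_mul ht hw37 (abs_nonneg _) (by positivity)
      _ = 111*s^3 := by ring
  have hwsq : w^2 ≤ 14*s^3 := CG_wsq s w hs hs1 hw37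
  have hid : a * (3 + 2*t) + b * (1 + u) - 2*(a+b) / 2 * Real.log (1 + u) + -(3*a+b)
      - (4*b / 2 * t ^ 2 + 2*a * q)
      = -(8*a*(m)) + (a+b)*(2*(t*w) + (w^2)/2) - (a+b)*h := by
    rw [hlogD, hu_def, hw_def]; ring
  rw [hid]
  exact CG_final a b s m (t*w) (w^2) h ha hb hm htw (sq_nonneg w) hwsq hh_bound

/-- Proposition (prop-small): small-strain expansion of the Ciarlet–Geymonat
energy. With `c = 2(a+b)`, `d = −(3a+b)`, `λ = 4b`, `μ = 2a`, for symmetric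
strains `E` (with `C = I + 2E`) one has
`W_CG = (λ/2) tr²E + μ tr E² + O(|E|³)` as `E → 0`. -/
theorem CG_small_strain (a b c d lam μ : ℝ) (ha : 0 < a) (hb : 0 < b)
    (hc : c = 2 * (a + b)) (hd : d = -(3 * a + b))
    (hlam : lam = 4 * b) (hμ : μ = 2 * a)
    (W : Matrix (Fin 3) (Fin 3) ℝ → ℝ)
    (hW : W = fun E =>
      a * (1 + 2 • E).trace + b * (1 + 2 • E).det
        - c / 2 * Real.log ((1 + 2 • E).det) + d) :
    (fun E : Matrix (Fin 3) (Fin 3) ℝ =>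
        W E - (lam / 2 * E.trace ^ 2 + μ * (E * E).trace)) =O[nhdsWithin 0
          {E : Matrix (Fin 3) (Fin 3) ℝ | E.IsSymm}]
      fun E => ‖E‖ ^ 3 := by
  subst hW hc hd hlam hμ
  rw [isBigO_iff]
  refine ⟨48*a + 1000*(a+b), ?_⟩
  have hball : Metric.ball (0 : Matrix (Fin 3) (Fin 3) ℝ) (1/100) ∈
      nhdsWithin 0 {E : Matrix (Fin 3) (Fin 3) ℝ | E.IsSymm} :=
    nhdsWithin_le_nhds (Metric.ball_mem_nhds _ (by norm_num))
  filter_upwards [hball] with E hE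
  rw [Metric.mem_ball, dist_zero_right] at hE
  have hs : 0 ≤ ‖E‖ := norm_nonneg E
  have hs1 : ‖E‖ ≤ 1/100 := hE.le
  have habs : ∀ i j, |E i j| ≤ ‖E‖ := CG_entry_le E
  have pair : ∀ i j k l : Fin 3, |E i j * E k l| ≤ ‖E‖^2 := fun i j k l => by
    rw [abs_mul, sq]
    exact mul_le_mul (habs i j) (habs k l) (abs_nonneg _) hs
  have triple : ∀ i j k l p r : Fin 3, |E i j * E k l * E p r| ≤ ‖E‖^3 := fun i j k l p r => by
    rw [abs_mul]
    calc |E i j * E k l| * |E p r| ≤ ‖E‖^2 * ‖E‖ :=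
          mul_le_mul (pair i j k l) (habs p r) (abs_nonneg _) (by positivity)
      _ = ‖E‖^3 := by ring
  have ht : |E.trace| ≤ 3*‖E‖ := by
    have h0 := abs_le.mp (habs 0 0); have h1 := abs_le.mp (habs 1 1); have h2 := abs_le.mp (habs 2 2)
    rw [Matrix.trace_fin_three, abs_le]
    exact ⟨by linarith [h0.1, h1.1, h2.1], by linarith [h0.2, h1.2, h2.2]⟩
  have hqe : (E*E).trace = E 0 0 * E 0 0 + E 0 1 * E 1 0 + E 0 2 * E 2 0
      + E 1 0 * E 0 1 + E 1 1 * E 1 1 + E 1 2 * E 2 1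
      + E 2 0 * E 0 2 + E 2 1 * E 1 2 + E 2 2 * E 2 2 := by
    simp [Matrix.trace_fin_three, Matrix.mul_apply, Fin.sum_univ_three]
    ring
  have hq : |(E*E).trace| ≤ 9*‖E‖^2 := by
    have b1 := abs_le.mp (pair 0 0 0 0); have b2 := abs_le.mp (pair 0 1 1 0)
    have b3 := abs_le.mp (pair 0 2 2 0); have b4 := abs_le.mp (pair 1 0 0 1)
    have b5 := abs_le.mp (pair 1 1 1 1); have b6 := abs_le.mp (pair 1 2 2 1)
    have b7 := abs_le.mp (pair 2 0 0 2); have b8 := abs_le.mp (pair 2 1 1 2)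
    have b9 := abs_le.mp (pair 2 2 2 2)
    rw [hqe, abs_le]
    constructor <;>
      linarith [b1.1,b1.2,b2.1,b2.2,b3.1,b3.2,b4.1,b4.2,b5.1,b5.2,b6.1,b6.2,b7.1,b7.2,b8.1,b8.2,b9.1,b9.2]
  have hm : |E.det| ≤ 6*‖E‖^3 := by
    have c1 := abs_le.mp (triple 0 0 1 1 2 2); have c2 := abs_le.mp (triple 0 0 1 2 2 1)
    have c3 := abs_le.mp (triple 0 1 1 0 2 2); have c4 := abs_le.mp (triple 0 1 1 2 2 0)
    have c5 := abs_le.mp (triple 0 2 1 0 2 1); have c6 := abs_le.mp (triple 0 2 1 1 2 0)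
    rw [Matrix.det_fin_three, abs_le]
    constructor <;> linarith [c1.1,c1.2,c2.1,c2.2,c3.1,c3.2,c4.1,c4.2,c5.1,c5.2,c6.1,c6.2]
  have key := CG_numeric a b ‖E‖ E.trace ((E*E).trace) E.det ha hb hs hs1 ht hq hm
  simp only [Real.norm_eq_abs]
  rw [abs_of_nonneg (by positivity : (0:ℝ) ≤ ‖E‖^3)]
  calc |a * (1 + 2 • E).trace + b * (1 + 2 • E).det
        - 2*(a+b) / 2 * Real.log ((1 + 2 • E).det) + -(3*a+b)
        - (4*b / 2 * E.trace ^ 2 + 2*a * (E*E).trace)|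
      = |a * (3 + 2*E.trace) + b * (1 + (2*E.trace + 2*(E.trace^2 - (E*E).trace) + 8*E.det))
        - 2*(a+b) / 2 * Real.log (1 + (2*E.trace + 2*(E.trace^2 - (E*E).trace) + 8*E.det)) + -(3*a+b)
        - (4*b / 2 * E.trace ^ 2 + 2*a * (E*E).trace)| := by
        rw [CG_trace_expand, CG_det_expand]
        ring_nf
    _ ≤ (48*a + 1000*(a+b)) * ‖E‖^3 := key
end

section
/- Let λ₁ > 0, λ₂ = 1/λ₁, and let c₁, c₂, c₁₂ be real numbers. Suppose a planar vector field c* = (λ₁/λ₂)c₁ r₁ + (λ₂/λ₁)c₂ r₂ is built from a compatible connector c (∇c symmetric) with c₁ = c·r₁, c₂ = c·r₂, c₁₂ = r₁·(∇c)r₂, where the orthonormal frame (r₁,r₂) satisfies ∇r₁ = r₂⊗c, ∇r₂ = −r₁⊗c, and the stretches λ₁, λ₂ are spatially uniform. Then the skew part of ∇c* equals (λ₁/λ₂ − λ₂/λ₁)(c₂² − c₁² + c₁₂)(r₁⊗r₂ − r₂⊗r₁), and consequently the Gaussian curvature satisfies K = (1/λ₂² − 1/λ₁²)(c₂² − c₁²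 + c₁₂). -/
/-!
In the frame `(r₁, r₂)` every antisymmetric bilinear form on the plane is a multiple of
`r₂ ⊗ r₁ - r₁ ⊗ r₂`, so the skew part of `∇c*` is determined by the single number
`∇c*(r₂) ⬝ r₁ - ∇c*(r₁) ⬝ r₂`. The product rule, `∇r₁ = r₂ ⊗ c`, `∇r₂ = -r₁ ⊗ c` and the
symmetry of `∇c` evaluate it to `(λ₁/λ₂ - λ₂/λ₁)(c₂² - c₁² + c₁₂)`. Testing the defining
relation of `K` on the pair `(r₂, r₁)` and using `λ₁λ₂ = 1` then gives `K`.
-/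

open Matrix

theorem sum_dotProduct_row_smul_row_eq {n : Type*} [Fintype n] [DecidableEq n]
    {Q : Matrix n n ℝ} (hQ : Q ∈ orthogonalGroup n ℝ) (u : n → ℝ) :
    ∑ i, (Q i ⬝ᵥ u) • Q i = u :=
  calc ∑ i, (Q i ⬝ᵥ u) • Q i = (Qᵀ * Q) *ᵥ u := by
        rw [← mulVec_mulVec, ← vecMul_transpose, transpose_transpose, vecMul_eq_sum]; rfl
    _ = u := by rw [(mem_orthogonalGroup_iff' n ℝ).mp hQ, one_mulVec]

theorem eq_dotProduct_smul_add_dotProduct_smul {a b : Fin 2 → ℝ} (haa : a ⬝ᵥ a = 1)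
    (hbb : b ⬝ᵥ b = 1) (hab : a ⬝ᵥ b = 0) (u : Fin 2 → ℝ) :
    u = (a ⬝ᵥ u) • a + (b ⬝ᵥ u) • b := by
  have hQ : Matrix.of ![a, b] ∈ orthogonalGroup (Fin 2) ℝ := by
    rw [mem_orthogonalGroup_iff]
    ext i j
    fin_cases i <;> fin_cases j <;>
      simp [mul_apply, ← dotProduct.eq_1, haa, hbb, hab, dotProduct_comm b a]
  have hsum := (sum_dotProduct_row_smul_row_eq hQ u).symm
  rwa [Fin.sum_univ_two] at hsum

theorem apply_dotProduct_sub_apply_dotProduct_eq {F : Type*}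
    [FunLike F (Fin 2 → ℝ) (Fin 2 → ℝ)] [LinearMapClass F ℝ (Fin 2 → ℝ) (Fin 2 → ℝ)]
    {a b : Fin 2 → ℝ} (haa : a ⬝ᵥ a = 1) (hbb : b ⬝ᵥ b = 1) (hab : a ⬝ᵥ b = 0)
    (L : F) (v w : Fin 2 → ℝ) :
    L v ⬝ᵥ w - L w ⬝ᵥ v =
      (L b ⬝ᵥ a - L a ⬝ᵥ b) * ((b ⬝ᵥ v) * (a ⬝ᵥ w) - (a ⬝ᵥ v) * (b ⬝ᵥ w)) := by
  rw [eq_dotProduct_smul_add_dotProduct_smul haa hbb hab v,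
    eq_dotProduct_smul_add_dotProduct_smul haa hbb hab w]
  simp only [map_add, map_smul, add_dotProduct, dotProduct_add, smul_dotProduct,
    dotProduct_smul, smul_eq_mul, haa, hbb, hab, dotProduct_comm b a]
  ring

section DotProduct

variable {ι E : Type*} [Fintype ι] [NormedAddCommGroup E] [NormedSpace ℝ E]
  {f g : E → ι → ℝ} {x : E}

theorem HasFDerivAt.dotProduct {f' g' : E →L[ℝ] ι → ℝ} (hf : HasFDerivAt f f' x)
    (hg : HasFDerivAt g g' x) :
    HasFDerivAt (fun y => f y ⬝ᵥ g y)
      (∑ i, (f x i • (ContinuousLinearMap.proj i).comp g' +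
        g x i • (ContinuousLinearMap.proj i).comp f')) x :=
  HasFDerivAt.fun_sum fun i _ => (hasFDerivAt_pi'.1 hf i).mul (hasFDerivAt_pi'.1 hg i)

theorem DifferentiableAt.dotProduct (hf : DifferentiableAt ℝ f x)
    (hg : DifferentiableAt ℝ g x) : DifferentiableAt ℝ (fun y => f y ⬝ᵥ g y) x :=
  (hf.hasFDerivAt.dotProduct hg.hasFDerivAt).differentiableAt

theorem fderiv_dotProduct_apply (hf : DifferentiableAt ℝ f x)
    (hg : DifferentiableAt ℝ g x) (v : E) :
    fderiv ℝ (fun y => f y ⬝ᵥ g y) x v = fderiv ℝ f x v ⬝ᵥ g x + f x ⬝ᵥ fderiv ℝ g x v := by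
  rw [(hf.hasFDerivAt.dotProduct hg.hasFDerivAt).fderiv]
  simp [dotProduct, Finset.sum_add_distrib, mul_comm, add_comm]

end DotProduct

section MovingFrame

variable {ι : Type*} [Fintype ι] {r s c : (ι → ℝ) → ι → ℝ} {x : ι → ℝ}

/-- With `(r, s) = (r₁, r₂)` and `(r₂, -r₁)` these are the identities
`∇c₁ = (∇c)ᵀ r₁ + c₂ c` and `∇c₂ = (∇c)ᵀ r₂ - c₁ c`. -/
theorem fderiv_dotProduct_of_fderiv_eq_smul (hc : DifferentiableAt ℝ c x)
    (hr : DifferentiableAt ℝ r x) (hr' : ∀ v, fderiv ℝ r x v = (c x ⬝ᵥ v) • s x)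
    (v : ι → ℝ) :
    fderiv ℝ (fun y => c y ⬝ᵥ r y) x v = fderiv ℝ c x v ⬝ᵥ r x + (c x ⬝ᵥ v) * (c x ⬝ᵥ s x) := by
  rw [fderiv_dotProduct_apply hc hr, hr', dotProduct_smul, smul_eq_mul]

theorem fderiv_smul_dotProduct_of_fderiv_eq_smul (hc : DifferentiableAt ℝ c x)
    (hr : DifferentiableAt ℝ r x) (hr' : ∀ v, fderiv ℝ r x v = (c x ⬝ᵥ v) • s x)
    (k : ℝ) (v w : ι → ℝ) :
    fderiv ℝ (fun y => (k * (c y ⬝ᵥ r y)) • r y) x v ⬝ᵥ w =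
      k * ((fderiv ℝ c x v ⬝ᵥ r x + (c x ⬝ᵥ v) * (c x ⬝ᵥ s x)) * (r x ⬝ᵥ w) +
        (c x ⬝ᵥ r x) * ((c x ⬝ᵥ v) * (s x ⬝ᵥ w))) := by
  rw [fderiv_fun_smul ((hc.dotProduct hr).const_mul k) hr, fderiv_const_mul (hc.dotProduct hr)]
  simp only [_root_.add_apply, _root_.smul_apply, ContinuousLinearMap.smulRight_apply,
    fderiv_dotProduct_of_fderiv_eq_smul hc hr hr', hr', add_dotProduct, smul_dotProduct,
    smul_eq_mul]
  ring

/-- The field `c*` of the paper, for `a = λ₁/λ₂` and `b = λ₂/λ₁`. -/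
def stretchedConnector (a b : ℝ) (r₁ r₂ c : (ι → ℝ) → ι → ℝ) : (ι → ℝ) → ι → ℝ :=
  fun y => (a * (c y ⬝ᵥ r₁ y)) • r₁ y + (b * (c y ⬝ᵥ r₂ y)) • r₂ y

variable {r₁ r₂ : (ι → ℝ) → ι → ℝ}

theorem fderiv_stretchedConnector_apply_sub (a b : ℝ)
    (hr₁r₁ : r₁ x ⬝ᵥ r₁ x = 1) (hr₂r₂ : r₂ x ⬝ᵥ r₂ x = 1) (hr₁r₂ : r₁ x ⬝ᵥ r₂ x = 0)
    (hc : DifferentiableAt ℝ c x) (hr₁ : DifferentiableAt ℝ r₁ x)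
    (hr₂ : DifferentiableAt ℝ r₂ x) (hr₁' : ∀ v, fderiv ℝ r₁ x v = (c x ⬝ᵥ v) • r₂ x)
    (hr₂' : ∀ v, fderiv ℝ r₂ x v = -((c x ⬝ᵥ v) • r₁ x))
    (hsym : fderiv ℝ c x (r₁ x) ⬝ᵥ r₂ x = fderiv ℝ c x (r₂ x) ⬝ᵥ r₁ x) :
    fderiv ℝ (stretchedConnector a b r₁ r₂ c) x (r₂ x) ⬝ᵥ r₁ x -
        fderiv ℝ (stretchedConnector a b r₁ r₂ c) x (r₁ x) ⬝ᵥ r₂ x =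
      (a - b) * ((c x ⬝ᵥ r₂ x) ^ 2 - (c x ⬝ᵥ r₁ x) ^ 2 + r₁ x ⬝ᵥ fderiv ℝ c x (r₂ x)) := by
  have hr₂_neg : ∀ v, fderiv ℝ r₂ x v = (c x ⬝ᵥ v) • -r₁ x := fun v => by rw [hr₂', smul_neg]
  unfold stretchedConnector
  rw [fderiv_fun_add (((hc.dotProduct hr₁).const_mul a).fun_smul hr₁)
    (((hc.dotProduct hr₂).const_mul b).fun_smul hr₂)]
  simp only [_root_.add_apply, add_dotProduct,
    fderiv_smul_dotProduct_of_fderiv_eq_smul hc hr₁ hr₁',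
    fderiv_smul_dotProduct_of_fderiv_eq_smul (s := fun y => -r₁ y) hc hr₂ hr₂_neg,
    neg_dotProduct, dotProduct_neg, hr₁r₁, hr₂r₂, hr₁r₂, dotProduct_comm (r₂ x) (r₁ x), hsym,
    dotProduct_comm (r₁ x) (fderiv ℝ c x (r₂ x))]
  ring

end MovingFrame

theorem fderiv_stretchedConnector_skew {r₁ r₂ c : (Fin 2 → ℝ) → Fin 2 → ℝ} {x : Fin 2 → ℝ}
    (a b : ℝ) (hr₁r₁ : r₁ x ⬝ᵥ r₁ x = 1) (hr₂r₂ : r₂ x ⬝ᵥ r₂ x = 1)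
    (hr₁r₂ : r₁ x ⬝ᵥ r₂ x = 0) (hc : DifferentiableAt ℝ c x)
    (hr₁ : DifferentiableAt ℝ r₁ x) (hr₂ : DifferentiableAt ℝ r₂ x)
    (hr₁' : ∀ v, fderiv ℝ r₁ x v = (c x ⬝ᵥ v) • r₂ x)
    (hr₂' : ∀ v, fderiv ℝ r₂ x v = -((c x ⬝ᵥ v) • r₁ x))
    (hsym : fderiv ℝ c x (r₁ x) ⬝ᵥ r₂ x = fderiv ℝ c x (r₂ x) ⬝ᵥ r₁ x) (v w : Fin 2 → ℝ) :
    fderiv ℝ (stretchedConnector a b r₁ r₂ c) x v ⬝ᵥ w -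
        fderiv ℝ (stretchedConnector a b r₁ r₂ c) x w ⬝ᵥ v =
      (a - b) * ((c x ⬝ᵥ r₂ x) ^ 2 - (c x ⬝ᵥ r₁ x) ^ 2 + r₁ x ⬝ᵥ fderiv ℝ c x (r₂ x)) *
        ((r₂ x ⬝ᵥ v) * (r₁ x ⬝ᵥ w) - (r₁ x ⬝ᵥ v) * (r₂ x ⬝ᵥ w)) := by
  rw [apply_dotProduct_sub_apply_dotProduct_eq hr₁r₁ hr₂r₂ hr₁r₂,
    fderiv_stretchedConnector_apply_sub a b hr₁r₁ hr₂r₂ hr₁r₂ hc hr₁ hr₂ hr₁' hr₂' hsym]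

/-- Coordinate-free theorema egregium formula (eq:theorema_egregium_reduced):
for uniform principal stretches `λ₁ > 0`, `λ₂ = 1/λ₁` and a compatible
connector `c` of the orthonormal frame `(r₁, r₂)`, the skew part of `∇c*`
equals `(λ₁/λ₂ − λ₂/λ₁)(c₂² − c₁² + c₁₂)(r₁⊗r₂ − r₂⊗r₁)`, and hence
`K = (1/λ₂² − 1/λ₁²)(c₂² − c₁² + c₁₂)`. -/
theorem theorema_egregium_uniform_stretches
    (lam1 lam2 : ℝ) (hlam1 : 0 < lam1) (hlam2 : lam2 = 1 / lam1)
    (r₁ r₂ c cst : (Fin 2 → ℝ) → (Fin 2 → ℝ)) (K : ℝ)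
    (hr₁r₁ : ∀ x, r₁ x ⬝ᵥ r₁ x = 1) (hr₂r₂ : ∀ x, r₂ x ⬝ᵥ r₂ x = 1)
    (hr₁r₂ : ∀ x, r₁ x ⬝ᵥ r₂ x = 0)
    (hdr₁ : Differentiable ℝ r₁) (hdr₂ : Differentiable ℝ r₂)
    (hdc : Differentiable ℝ c)
    (hgradr₁ : ∀ x v, fderiv ℝ r₁ x v = (c x ⬝ᵥ v) • r₂ x)
    (hgradr₂ : ∀ x v, fderiv ℝ r₂ x v = -((c x ⬝ᵥ v) • r₁ x))
    (hsymc : ∀ x v w, fderiv ℝ c x v ⬝ᵥ w = fderiv ℝ c x w ⬝ᵥ v)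
    (hcst : cst = fun x =>
      (lam1 / lam2 * (c x ⬝ᵥ r₁ x)) • r₁ x + (lam2 / lam1 * (c x ⬝ᵥ r₂ x)) • r₂ x)
    (hK : ∀ x v w,
      fderiv ℝ cst x v ⬝ᵥ w - fderiv ℝ cst x w ⬝ᵥ v =
        lam1 * lam2 * K *
          ((r₂ x ⬝ᵥ v) * (r₁ x ⬝ᵥ w) - (r₁ x ⬝ᵥ v) * (r₂ x ⬝ᵥ w))) :
    (∀ x v w,
      fderiv ℝ cst x v ⬝ᵥ w - fderiv ℝ cst x w ⬝ᵥ v =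
        (lam1 / lam2 - lam2 / lam1) *
          ((c x ⬝ᵥ r₂ x) ^ 2 - (c x ⬝ᵥ r₁ x) ^ 2 + r₁ x ⬝ᵥ fderiv ℝ c x (r₂ x)) *
          ((r₂ x ⬝ᵥ v) * (r₁ x ⬝ᵥ w) - (r₁ x ⬝ᵥ v) * (r₂ x ⬝ᵥ w))) ∧
    (∀ x, K =
      (1 / lam2 ^ 2 - 1 / lam1 ^ 2) *
        ((c x ⬝ᵥ r₂ x) ^ 2 - (c x ⬝ᵥ r₁ x) ^ 2 + r₁ x ⬝ᵥ fderiv ℝ c x (r₂ x))) := by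
  replace hcst : cst = stretchedConnector (lam1 / lam2) (lam2 / lam1) r₁ r₂ c := hcst
  subst hcst
  have hskew x := fderiv_stretchedConnector_skew (lam1 / lam2) (lam2 / lam1) (hr₁r₁ x)
    (hr₂r₂ x) (hr₁r₂ x) (hdc x) (hdr₁ x) (hdr₂ x) (hgradr₁ x) (hgradr₂ x) (hsymc x _ _)
  refine ⟨hskew, fun x => ?_⟩
  have hK' := (hK x (r₂ x) (r₁ x)).symm.trans (hskew x (r₂ x) (r₁ x))
  rw [hr₁r₁, hr₂r₂, dotProduct_comm (r₂ x), hr₁r₂] at hK'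
  subst hlam2
  field_simp at hK' ⊢
  linarith
end
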